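/- Let H(1,2;2,n−5) for n ≥ 6 be the bipartite graph with U1 = {u1}, U2 = {u2, u3}, |V1| = 2, |V2| = n−5, where u1 is adjacent to all of V1 ∪ V2 and u2, u3 are each adjacent exactly to V1. Then the number of spanning trees of H(1,2;2,n−5) equals 12. -/

import Mathlib

noncomputable def spanningTreeCount {V : Type*} (G : SimpleGraph V) : ℕ :=
  {H : G.Subgraph | H.IsSpanning ∧ H.coe.IsTree}.ncard

/-- The double nested graph `H(1,m₂; a, b)`: `u₁ = Sum.inl 0` is adjacent to all of
`V₁ ∪ V₂`, and the `m₂` vertices `Sum.inl i`, `i ≠ 0`, are adjacent exactly to `V₁`. -/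
def DNH (m2 a b : ℕ) : SimpleGraph (Fin (1 + m2) ⊕ (Fin a ⊕ Fin b)) :=
  SimpleGraph.fromRel (fun x y =>
    (∃ v : Fin a ⊕ Fin b, x = Sum.inl ⟨0, Nat.succ_le_of_lt (Nat.lt_of_lt_of_le Nat.zero_lt_one (Nat.le_add_right 1 m2))⟩ ∧ y = Sum.inr v) ∨
    (∃ (u : Fin (1 + m2)) (v : Fin a), (u : ℕ) ≠ 0 ∧ x = Sum.inl u ∧ y = Sum.inr (Sum.inl v)))

/-!
The vertices of `V₂` are leaves hanging at `u₁`, so every spanning tree contains their edges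
and the count is that of the spanning trees of the core `K_{3,2}` on `U ∪ V₁`. In a spanning
tree some `u_k` is joined to both vertices of `V₁` (otherwise they lie in different
components), and once such a `u_k` is fixed the other two `u`'s each need one edge to `V₁`.
These `3 · 2 · 2 = 12` graphs are trees, being graphs of a parent map along which a rank
strictly decreases; and every spanning tree contains one of them, hence equals it, since
a tree is minimally connected.
-/

namespace SimpleGraph

variable {V : Type*} {G T : SimpleGraph V}

theorem spanningTreeCount_eq_ncard (G : SimpleGraph V) :
    spanningTreeCount G = {T : SimpleGraph V | T ≤ G ∧ T.IsTree}.ncard := by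
  have himage :
      Subgraph.spanningCoe '' {H : G.Subgraph | H.IsSpanning ∧ H.coe.IsTree} =
        {T : SimpleGraph V | T ≤ G ∧ T.IsTree} := by
    ext T
    constructor
    · rintro ⟨H, ⟨hsp, htree⟩, rfl⟩
      exact ⟨H.spanningCoe_le, (H.spanningCoeEquivCoeOfSpanning hsp).isTree_iff.mpr htree⟩
    · rintro ⟨hle, htree⟩
      have hsp := toSubgraph.isSpanning T hle
      have hiso := (toSubgraph T hle).spanningCoeEquivCoeOfSpanning hsp
      exact ⟨toSubgraph T hle, ⟨hsp, hiso.isTree_iff.mp htree⟩, rfl⟩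
  rw [spanningTreeCount, ← himage, Set.InjOn.ncard_image]
  intro H₁ h₁ H₂ h₂ h
  exact Subgraph.ext (by rw [h₁.1.verts_eq_univ, h₂.1.verts_eq_univ]) (congrArg Adj h)

theorem Reachable.mem_of_adj_closed {S : Set V} (hS : ∀ x y, G.Adj x y → x ∈ S → y ∈ S)
    {x y : V} (h : G.Reachable x y) (hx : x ∈ S) : y ∈ S := by
  obtain ⟨p⟩ := h
  induction p with
  | nil => exact hx
  | cons hadj _ ih => exact ih (hS _ _ hadj hx)

theorem isAcyclic_of_adj_le_unique (f : V → ℕ)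
    (hf : ∀ x y z, G.Adj x y → G.Adj x z → f y ≤ f x → f z ≤ f x → y = z) :
    G.IsAcyclic := by
  classical
  intro v c hc
  obtain ⟨u, hu, hmax⟩ := c.support.toFinset.exists_max_image f ⟨v, by simp⟩
  rw [List.mem_toFinset] at hu
  set c' := c.rotate u hu
  have hc' : c'.IsCycle := hc.rotate hu
  have hnil : ¬ c'.Nil := hc'.not_nil
  have hle : ∀ w ∈ c'.support, f w ≤ f u := fun w hw ↦
    hmax w (List.mem_toFinset.mpr ((c.mem_support_rotate_iff u hu).mp hw))
  exact hc'.snd_ne_penultimate <| hf u _ _ (c'.adj_snd hnil) (c'.adj_penultimate hnil).symm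
    (hle _ (c'.getVert_mem_support 1)) (hle _ (c'.getVert_mem_support _))

theorem IsTree.eq_of_le (hT : T.IsTree) (hG : G.Connected) (h : G ≤ T) : G = T :=
  (isTree_iff_minimal_connected.mp hT).eq_of_le hG h

def parentGraph (r : V) (π : V → V) : SimpleGraph V :=
  fromRel fun x y ↦ x ≠ r ∧ y = π x

theorem parentGraph_le (r : V) {π : V → V} (h : ∀ x ≠ r, G.Adj x (π x)) :
    parentGraph r π ≤ G := by
  rintro x y ⟨-, ⟨hx, rfl⟩ | ⟨hy, rfl⟩⟩
  · exact h x hx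
  · exact (h y hy).symm

variable {r : V} {π : V → V}

theorem parentGraph_reachable_root (rank : V → ℕ) (hrank : ∀ x ≠ r, rank (π x) < rank x)
    (x : V) : (parentGraph r π).Reachable x r := by
  induction hx : rank x using Nat.strong_induction_on generalizing x with
  | _ n ih =>
    by_cases hxr : x = r
    · exact hxr ▸ .rfl
    have hlt := hrank x hxr
    have hadj : (parentGraph r π).Adj x (π x) :=
      ⟨fun h ↦ by rw [← h] at hlt; omega, .inl ⟨hxr, rfl⟩⟩
    exact hadj.reachable.trans (ih _ (hx ▸ hlt) _ rfl)

theorem isTree_parentGraph (rank : V → ℕ) (hrank : ∀ x ≠ r, rank (π x) < rank x) :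
    (parentGraph r π).IsTree := by
  have : Nonempty V := ⟨r⟩
  refine ⟨⟨fun x y ↦ (parentGraph_reachable_root rank hrank x).trans
    (parentGraph_reachable_root rank hrank y).symm⟩, isAcyclic_of_adj_le_unique rank ?_⟩
  have hparent : ∀ x y, (parentGraph r π).Adj x y → rank y ≤ rank x → y = π x := by
    rintro x y ⟨-, ⟨-, rfl⟩ | ⟨hy, rfl⟩⟩ hle
    · rfl
    · exact absurd hle (not_le.mpr (hrank y hy))
  intro x y z hy hz hyx hzx
  rw [hparent x y hy hyx, hparent x z hz hzx]

end SimpleGraph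

theorem Fin.eq_add_one_or_eq_add_two_of_ne :
    ∀ {k k₀ : Fin 3}, k ≠ k₀ → k = k₀ + 1 ∨ k = k₀ + 2 := by
  decide

open SimpleGraph

namespace DNH

section

variable {m2 a b : ℕ}

theorem not_adj_inl_inl (u u' : Fin (1 + m2)) :
    ¬ (DNH m2 a b).Adj (.inl u) (.inl u') := by
  simp [DNH]

theorem not_adj_inr_inr (v v' : Fin a ⊕ Fin b) :
    ¬ (DNH m2 a b).Adj (.inr v) (.inr v') := by
  simp [DNH]

theorem adj_inl_inr (u : Fin (1 + m2)) (v : Fin a ⊕ Fin b) :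
    (DNH m2 a b).Adj (.inl u) (.inr v) ↔ (u : ℕ) = 0 ∨ v.isLeft := by
  rcases v with j | v <;> simp [DNH, em]

theorem adj_inr_inl (u : Fin (1 + m2)) (v : Fin a ⊕ Fin b) :
    (DNH m2 a b).Adj (.inr v) (.inl u) ↔ (u : ℕ) = 0 ∨ v.isLeft := by
  rw [adj_comm, adj_inl_inr]

end

variable {b : ℕ} {T : SimpleGraph (Fin (1 + 2) ⊕ (Fin 2 ⊕ Fin b))}

theorem adj_inr_inr_inl_zero (hle : T ≤ DNH 2 2 b) (hT : T.Connected) (v : Fin b) :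
    T.Adj (.inr (.inr v)) (.inl 0) := by
  obtain ⟨p⟩ := hT.preconnected (.inr (.inr v)) (.inl 0)
  have hadj := p.adj_snd fun h ↦ Sum.inr_ne_inl h.eq
  generalize p.snd = y at hadj
  rcases y with k | y
  · have hk := hle hadj
    simp only [adj_inr_inl, Fin.val_eq_zero_iff, Sum.isLeft_inr, Bool.false_eq_true,
      or_false] at hk
    exact hk ▸ hadj
  · exact absurd (hle hadj) (not_adj_inr_inr _ _)

theorem exists_adj_inl_inr_inl (hle : T ≤ DNH 2 2 b) (hT : T.Connected) (k : Fin (1 + 2)) :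
    ∃ j, T.Adj (.inl k) (.inr (.inl j)) := by
  by_contra! hk
  let S : Set (Fin (1 + 2) ⊕ (Fin 2 ⊕ Fin b)) :=
    {x | x = .inl k ∨ (k = 0 ∧ ∃ v, x = .inr (.inr v))}
  have hS : ∀ x y, T.Adj x y → x ∈ S → y ∈ S := by
    rintro x (k' | j | v) hxy (rfl | ⟨rfl, v, rfl⟩)
    all_goals have h : (DNH 2 2 b).Adj _ _ := hle hxy
    all_goals simp only [adj_inl_inr, adj_inr_inl, not_adj_inl_inl, not_adj_inr_inr] at h
    all_goals first | exact absurd hxy (hk _) | simp_all [S]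
  simpa [S] using (hT.preconnected (.inl k) (.inr (.inl 0))).mem_of_adj_closed hS (.inl rfl)

theorem exists_adj_inl_inr_inl_both (hle : T ≤ DNH 2 2 b) (hT : T.Connected) :
    ∃ k, T.Adj (.inl k) (.inr (.inl 0)) ∧ T.Adj (.inl k) (.inr (.inl 1)) := by
  by_contra! hk
  let S : Set (Fin (1 + 2) ⊕ (Fin 2 ⊕ Fin b)) := {x | x = .inr (.inl 0) ∨
    (∃ k, x = .inl k ∧ T.Adj (.inl k) (.inr (.inl 0))) ∨
    ((∃ v, x = .inr (.inr v)) ∧ T.Adj (.inl 0) (.inr (.inl 0)))}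
  have hS : ∀ x y, T.Adj x y → x ∈ S → y ∈ S := by
    rintro x (k' | j | v) hxy (rfl | ⟨k, rfl, hk0⟩ | ⟨⟨v, rfl⟩, h0⟩)
    all_goals have h : (DNH 2 2 b).Adj _ _ := hle hxy
    all_goals simp only [adj_inl_inr, adj_inr_inl, not_adj_inl_inl, not_adj_inr_inr] at h
    all_goals try fin_cases j
    all_goals simp_all [S, T.adj_comm]
  simpa [S] using (hT.preconnected (.inr (.inl 0)) (.inr (.inl 1))).mem_of_adj_closed hS (.inl rfl)

/-- With `u_k = .inl k` and `w_j = .inr (.inl j)`, the code `(k₀, j₁, j₂)` stands for the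
spanning tree in which `u_{k₀}` is joined to both `w`'s, `u_{k₀+1}` to `w_{j₁}` and
`u_{k₀+2}` to `w_{j₂}`. -/
abbrev TreeCode : Type := Fin (1 + 2) × Fin 2 × Fin 2

def TreeCode.target (q : TreeCode) (k : Fin (1 + 2)) : Fin 2 :=
  if k = q.1 + 1 then q.2.1 else q.2.2

def treeParent (q : TreeCode) :
    Fin (1 + 2) ⊕ (Fin 2 ⊕ Fin b) → Fin (1 + 2) ⊕ (Fin 2 ⊕ Fin b)
  | .inl k => .inr (.inl (q.target k))
  | .inr (.inl _) => .inl q.1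
  | .inr (.inr _) => .inl 0

variable (b) in
def bicyclicTree (q : TreeCode) : SimpleGraph (Fin (1 + 2) ⊕ (Fin 2 ⊕ Fin b)) :=
  parentGraph (.inl q.1) (treeParent q)

theorem isTree_bicyclicTree (q : TreeCode) : (bicyclicTree b q).IsTree := by
  let rank : Fin (1 + 2) ⊕ (Fin 2 ⊕ Fin b) → ℕ
    | .inl k => if k = q.1 then 0 else 2
    | .inr (.inl _) => 1
    | .inr (.inr _) => 3
  refine isTree_parentGraph rank ?_
  rintro (k | j | v) hx
  · simp_all [rank, treeParent]
  · simp [rank, treeParent]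
  · simp only [rank, treeParent]
    split_ifs <;> omega

theorem bicyclicTree_le (q : TreeCode) : bicyclicTree b q ≤ DNH 2 2 b := by
  refine parentGraph_le _ ?_
  rintro (k | j | v) -
  · simp only [treeParent, adj_inl_inr, Sum.isLeft_inl, or_true]
  · simp only [treeParent, adj_inr_inl, Sum.isLeft_inl, or_true]
  · simp only [treeParent, adj_inr_inl, Fin.val_zero, true_or]

theorem bicyclicTree_adj_inl_inr_inl (q : TreeCode) (k : Fin (1 + 2)) (j : Fin 2) :
    (bicyclicTree b q).Adj (.inl k) (.inr (.inl j)) ↔ k = q.1 ∨ j = q.target k := by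
  simp only [bicyclicTree, parentGraph, treeParent, fromRel_adj, ne_eq, reduceCtorEq,
    not_false_eq_true, Sum.inl.injEq, Sum.inr.injEq, eq_comm, true_and]
  tauto

theorem bicyclicTree_injective : Function.Injective (bicyclicTree b) := by
  intro q q' h
  have key : ∀ k j, (k = q.1 ∨ j = q.target k) ↔ (k = q'.1 ∨ j = q'.target k) := by
    simp only [← bicyclicTree_adj_inl_inr_inl (b := b), h, implies_true]
  clear h
  revert q q'
  decide

theorem exists_bicyclicTree_le (hle : T ≤ DNH 2 2 b) (hT : T.Connected) :
    ∃ q, bicyclicTree b q ≤ T := by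
  obtain ⟨k₀, h₀, h₁⟩ := exists_adj_inl_inr_inl_both hle hT
  obtain ⟨j₁, hj₁⟩ := exists_adj_inl_inr_inl hle hT (k₀ + 1)
  obtain ⟨j₂, hj₂⟩ := exists_adj_inl_inr_inl hle hT (k₀ + 2)
  refine ⟨(k₀, j₁, j₂), parentGraph_le _ ?_⟩
  rintro (k | j | v) hk
  · have hk : k = k₀ + 1 ∨ k = k₀ + 2 :=
      Fin.eq_add_one_or_eq_add_two_of_ne (hk <| congrArg _ ·)
    simp only [treeParent, TreeCode.target]
    split_ifs with h
    · exact h ▸ hj₁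
    · exact (hk.resolve_left h) ▸ hj₂
  · fin_cases j
    exacts [h₀.symm, h₁.symm]
  · exact adj_inr_inr_inl_zero hle hT v

theorem setOf_le_isTree_eq_range :
    {T | T ≤ DNH 2 2 b ∧ T.IsTree} = Set.range (bicyclicTree b) := by
  ext T
  constructor
  · rintro ⟨hle, hT⟩
    obtain ⟨q, hq⟩ := exists_bicyclicTree_le hle hT.connected
    exact ⟨q, hT.eq_of_le (isTree_bicyclicTree q).connected hq⟩
  · rintro ⟨q, rfl⟩
    exact ⟨bicyclicTree_le q, isTree_bicyclicTree q⟩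

end DNH

theorem spanningTreeCount_DNH_bicyclic_general (n : ℕ) :
    spanningTreeCount (DNH 2 2 (n - 5)) = 12 := by
  rw [spanningTreeCount_eq_ncard, DNH.setOf_le_isTree_eq_range,
    Set.ncard_range_of_injective DNH.bicyclicTree_injective, Nat.card_eq_fintype_card]
  rfl

/-- The double nested bicyclic graph `H(1,2; 2, n-5)`, `n ≥ 6`, has exactly 12 spanning
trees. -/
theorem spanningTreeCount_DNH_bicyclic (n : ℕ) (hn : 6 ≤ n) :
    spanningTreeCount (DNH 2 2 (n - 5)) = 12 :=
  spanningTreeCount_DNH_bicyclic_general n
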